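/- Let ⟨γ_n : n < ω⟩ be a strictly increasing sequence of infinite cardinals with supremum γ, and let 𝒟 be a function with domain {(0,0)} ∪ {(n,α) : 0 < n < ω, α < γ_{n-1}} such that 𝒟(0,0) is a γ_0-complete ultrafilter on γ_0 and, for each 0 < n < ω, each 𝒟(n,α) is a γ_n-complete ultrafilter on γ_n with 𝒟(n,α) ≠ 𝒟(n,β) whenever α ≠ β. Then every antichain in the forcing notion P_𝒟 (a set of pairwise incompatible conditions) has cardinality at most γ. -/

import Mathlib

universe u v

/-- An ultrafilter `W` on a set is `κ`-complete if the intersection of any family of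
fewer than `κ` members of `W` is again a member of `W`. -/
def UFComplete (κ : Cardinal.{u}) {X : Type v} (W : Ultrafilter X) : Prop :=
  ∀ (ι : Type u) (f : ι → Set X), Cardinal.mk ι < κ → (∀ i, f i ∈ W) → (⋂ i, f i) ∈ W

/-- The set of ordinals below the cardinal `c`. -/
def OT (c : Cardinal.{u}) : Type (u + 1) := ↥(Set.Iio c.ord)

/-- A `𝒟`-string: a nonempty finite strictly increasing sequence `s` of ordinals with
`s(i) < γ_i` for all `i < |s|`. -/
def IsStr (γ : ℕ → Cardinal.{u}) (s : List Ordinal.{u}) : Prop :=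
  s ≠ [] ∧ s.Pairwise (· < ·) ∧ ∀ (i : ℕ) (h : i < s.length), s.get ⟨i, h⟩ < (γ i).ord

/-- A `𝒟`-choice function: `F(x) ∈ 𝒟(x)` for every `x` in the domain
`{(0,0)} ∪ {(n,α) : 0 < n < ω, α < γ_{n-1}}` of `𝒟`. -/
def IsDChoice (γ : ℕ → Cardinal.{u})
    (D : (n : ℕ) → Ordinal.{u} → Ultrafilter (OT (γ n)))
    (F : (n : ℕ) → Ordinal.{u} → Set (OT (γ n))) : Prop :=
  F 0 0 ∈ D 0 0 ∧ ∀ (n : ℕ) (α : Ordinal.{u}), α < (γ n).ord → F (n + 1) α ∈ D (n + 1) α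

/-- A condition of `P_𝒟`: a pair `(s, F)` where `s` is a `𝒟`-string and `F` a
`𝒟`-choice function. -/
def IsCondD (γ : ℕ → Cardinal.{u})
    (D : (n : ℕ) → Ordinal.{u} → Ultrafilter (OT (γ n)))
    (p : List Ordinal.{u} × ((n : ℕ) → Ordinal.{u} → Set (OT (γ n)))) : Prop :=
  IsStr γ p.1 ∧ IsDChoice γ D p.2

/-- `p = (s', F')` is stronger than `q = (s, F)`:
(a) `|s| ≤ |s'|` and `s'↾|s| = s`; (b) `F'(x) ⊆ F(x)` for all `x` in the domain of `𝒟`;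
(c) `s'(i) ∈ F(i, s'(i-1))` for all `|s| ≤ i < |s'|`. -/
def StrongerD (γ : ℕ → Cardinal.{u})
    (p q : List Ordinal.{u} × ((n : ℕ) → Ordinal.{u} → Set (OT (γ n)))) : Prop :=
  q.1 <+: p.1 ∧
  (p.2 0 0 ⊆ q.2 0 0 ∧
    ∀ (n : ℕ) (α : Ordinal.{u}), α < (γ n).ord → p.2 (n + 1) α ⊆ q.2 (n + 1) α) ∧
  ∀ (i : ℕ) (h : i < p.1.length), q.1.length ≤ i →
    p.1.get ⟨i, h⟩ ∈ Subtype.val '' (q.2 i (p.1.get ⟨i - 1, by omega⟩))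

/-- Compatibility in `P_𝒟`: some condition is stronger than both. -/
def CompatibleD (γ : ℕ → Cardinal.{u})
    (D : (n : ℕ) → Ordinal.{u} → Ultrafilter (OT (γ n)))
    (p q : List Ordinal.{u} × ((n : ℕ) → Ordinal.{u} → Set (OT (γ n)))) : Prop :=
  ∃ r, IsCondD γ D r ∧ StrongerD γ r p ∧ StrongerD γ r q

/-!
Two conditions with the same string `s` are compatible: `(s, F ∩ G)` extends both, since each
`𝒟(x)` is a filter. So an antichain injects into the set of strings, and every string is a finite
sequence of ordinals below `γ`, of which there are at most `max ℵ₀ γ = γ`.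
-/

open Cardinal

section Strings

theorem IsStr.lt_ord_iSup {γ : ℕ → Cardinal.{u}} {s : List Ordinal.{u}} (hs : IsStr γ s) :
    ∀ x ∈ s, x < (⨆ n, γ n).ord := by
  intro x hx
  obtain ⟨i, hi, rfl⟩ := List.getElem_of_mem hx
  exact (hs.2.2 i hi).trans_le (ord_le_ord.2 (le_ciSup bddAbove_of_small i))

theorem mk_setOf_forall_lt_ord_le {c : Cardinal.{u}} (hc : ℵ₀ ≤ c) :
    #{s : List Ordinal.{u} | ∀ x ∈ s, x < c.ord} ≤ lift.{u + 1} c := by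
  have hsub : {s : List Ordinal.{u} | ∀ x ∈ s, x < c.ord} ⊆
      Set.range (List.map (Subtype.val : Set.Iio c.ord → Ordinal.{u})) := by
    intro s hs
    lift s to List (Set.Iio c.ord) using hs
    exact ⟨s, rfl⟩
  calc #{s : List Ordinal.{u} | ∀ x ∈ s, x < c.ord}
      ≤ #(List (Set.Iio c.ord)) := (mk_le_mk_of_subset hsub).trans mk_range_le
    _ ≤ max ℵ₀ #(Set.Iio c.ord) := mk_list_le_max _
    _ = lift.{u + 1} c := by
      rw [mk_Iio_ordinal, card_ord, max_eq_right (by simpa using hc)]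

end Strings

section Conditions

variable {γ : ℕ → Cardinal.{u}} {D : (n : ℕ) → Ordinal.{u} → Ultrafilter (OT (γ n))}

theorem IsDChoice.inter {F G : (n : ℕ) → Ordinal.{u} → Set (OT (γ n))}
    (hF : IsDChoice γ D F) (hG : IsDChoice γ D G) :
    IsDChoice γ D (fun n α => F n α ∩ G n α) :=
  ⟨Filter.inter_mem hF.1 hG.1, fun n α hα => Filter.inter_mem (hF.2 n α hα) (hG.2 n α hα)⟩

theorem strongerD_of_fst_eq_of_subset
    {p q : List Ordinal.{u} × ((n : ℕ) → Ordinal.{u} → Set (OT (γ n)))}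
    (hs : p.1 = q.1) (hF : ∀ n α, p.2 n α ⊆ q.2 n α) : StrongerD γ p q :=
  ⟨hs ▸ List.prefix_refl _, ⟨hF 0 0, fun n α _ => hF (n + 1) α⟩,
    fun _ hi hle => absurd hi (hs ▸ hle).not_gt⟩

theorem compatibleD_of_fst_eq
    {p q : List Ordinal.{u} × ((n : ℕ) → Ordinal.{u} → Set (OT (γ n)))}
    (hp : IsCondD γ D p) (hq : IsCondD γ D q) (hs : p.1 = q.1) : CompatibleD γ D p q :=
  ⟨(p.1, fun n α => p.2 n α ∩ q.2 n α), ⟨hp.1, hp.2.inter hq.2⟩,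
    strongerD_of_fst_eq_of_subset rfl fun _ _ => Set.inter_subset_left,
    strongerD_of_fst_eq_of_subset hs fun _ _ => Set.inter_subset_right⟩

theorem injOn_fst_of_antichain
    {A : Set (List Ordinal.{u} × ((n : ℕ) → Ordinal.{u} → Set (OT (γ n))))}
    (hA : ∀ p ∈ A, IsCondD γ D p) (hanti : ∀ p ∈ A, ∀ q ∈ A, p ≠ q → ¬ CompatibleD γ D p q) :
    Set.InjOn Prod.fst A := fun p hp q hq hs =>
  by_contra fun hne => hanti p hp q hq hne (compatibleD_of_fst_eq (hA p hp) (hA q hq) hs)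

end Conditions

theorem antichain_le_gamma_general (γ : ℕ → Cardinal.{u})
    (hinf : ∀ n, Cardinal.aleph0 ≤ γ n)
    (D : (n : ℕ) → Ordinal.{u} → Ultrafilter (OT (γ n)))
    (A : Set (List Ordinal.{u} × ((n : ℕ) → Ordinal.{u} → Set (OT (γ n)))))
    (hA : ∀ p ∈ A, IsCondD γ D p)
    (hanti : ∀ p ∈ A, ∀ q ∈ A, p ≠ q → ¬ CompatibleD γ D p q) :
    Cardinal.mk A ≤ Cardinal.lift.{u + 1} (⨆ n, γ n) := by
  have hγ : ℵ₀ ≤ ⨆ n, γ n := (hinf 0).trans (le_ciSup bddAbove_of_small 0)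
  have hstrings : Prod.fst '' A ⊆ {s : List Ordinal.{u} | ∀ x ∈ s, x < (⨆ n, γ n).ord} := by
    rintro _ ⟨p, hp, rfl⟩
    exact (hA p hp).1.lt_ord_iSup
  calc #A = #(Prod.fst '' A) := (mk_image_eq_of_injOn _ _ (injOn_fst_of_antichain hA hanti)).symm
    _ ≤ #{s : List Ordinal.{u} | ∀ x ∈ s, x < (⨆ n, γ n).ord} := mk_le_mk_of_subset hstrings
    _ ≤ lift.{u + 1} (⨆ n, γ n) := mk_setOf_forall_lt_ord_le hγ

/-- With `⟨γ_n : n < ω⟩` a strictly increasing sequence of infinite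
cardinals with supremum `γ` and `𝒟` a list of `γ_n`-complete ultrafilters on the `γ_n`
as described (pairwise distinct at each level `n ≥ 1`), every antichain of the forcing
notion `P_𝒟` has cardinality at most `γ`. -/
theorem antichain_le_gamma (γ : ℕ → Cardinal.{u}) (hmono : StrictMono γ)
    (hinf : ∀ n, Cardinal.aleph0 ≤ γ n)
    (D : (n : ℕ) → Ordinal.{u} → Ultrafilter (OT (γ n)))
    (hD0 : UFComplete (γ 0) (D 0 0))
    (hDn : ∀ (n : ℕ) (α : Ordinal.{u}), α < (γ n).ord →
      UFComplete (γ (n + 1)) (D (n + 1) α))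
    (hdist : ∀ (n : ℕ) (α β : Ordinal.{u}), α < (γ n).ord → β < (γ n).ord →
      α ≠ β → D (n + 1) α ≠ D (n + 1) β)
    (A : Set (List Ordinal.{u} × ((n : ℕ) → Ordinal.{u} → Set (OT (γ n)))))
    (hA : ∀ p ∈ A, IsCondD γ D p)
    (hanti : ∀ p ∈ A, ∀ q ∈ A, p ≠ q → ¬ CompatibleD γ D p q) :
    Cardinal.mk A ≤ Cardinal.lift.{u + 1} (⨆ n, γ n) :=
  antichain_le_gamma_general γ hinf D A hA hanti
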